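/- Let A ∈ ℤ∞^{S×S} be a degenerate stable-cycle matrix and let C ∈ ℕ, C ≥ 1, be such that every finite entry of A has absolute value at most C. Then there exists m with 1 ≤ m ≤ (2+4𝔪C)^{|S|²} such that A^{2𝔪·|S|·m} = stab(A), i.e., for all t,r ∈ S the (t,r) entries coincide (including ∞ entries). -/

import Mathlib

/-- `ℤ∞ = ℤ ∪ {∞}`. -/
abbrev ZInf : Type := WithTop ℤ

/-- `𝔫 = |S|!`. -/
def nfac (S : Type*) [Fintype S] : ℕ := (Fintype.card S).factorial

/-- `𝔪 = |S| ⬝ 𝔫`. -/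
def mfac (S : Type*) [Fintype S] : ℕ := Fintype.card S * nfac S

/-- The `(s, r)` entry of a min-plus matrix, as an element of `ℤ∞`.
Matrices over `Tropical ZInf` are multiplied in the min-plus (tropical) semiring:
`(A * B) s r = min_t (A s t + B t r)`, and `A ^ n` is the `n`-fold min-plus power. -/
def en {S : Type*} (A : Matrix S S (Tropical ZInf)) (s r : S) : ZInf :=
  (A s r).untrop

/-- `A` is a stable-cycle matrix with baseline `s₀`: for every `n ≥ 1`, `(A^n)_{s₀,s₀} = 0`
and `(A^n)_{r,r} ≥ 0` for every `r`. -/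
def IsStableCycle {S : Type*} [Fintype S] [DecidableEq S]
    (A : Matrix S S (Tropical ZInf)) (s₀ : S) : Prop :=
  ∀ n : ℕ, 1 ≤ n → en (A ^ n) s₀ s₀ = 0 ∧ ∀ r : S, 0 ≤ en (A ^ n) r r

/-- `MinStates B = {r : B_{r,r} = 0}`. -/
def MinStates {S : Type*} (B : Matrix S S (Tropical ZInf)) : Set S :=
  {r | en B r r = 0}

/-- `RefStates B = {r : B_{r,r} < ∞}`. -/
def RefStates {S : Type*} (B : Matrix S S (Tropical ZInf)) : Set S :=
  {r | en B r r < ⊤}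

/-- `(s, r)` is a grounded pair for `A` if there is `g ∈ MinStates (A^𝔪)` with
`(A^𝔪)_{s,g} < ∞` and `(A^𝔪)_{g,r} < ∞`. -/
def GrnPairs {S : Type*} [Fintype S] [DecidableEq S] (A : Matrix S S (Tropical ZInf)) :
    Set (S × S) :=
  {p | ∃ g ∈ MinStates (A ^ mfac S),
      en (A ^ mfac S) p.1 g < ⊤ ∧ en (A ^ mfac S) g p.2 < ⊤}

/-- `g` is a grounding state of the pair `(s, r)`: it is in `MinStates (A^𝔪)`, has finite
entries `(A^𝔪)_{s,g}, (A^𝔪)_{g,r}`, and minimizes `(A^𝔪)_{s,g} + (A^𝔪)_{g,r}` among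
all states of `MinStates (A^𝔪)`. -/
def IsGroundingState {S : Type*} [Fintype S] [DecidableEq S]
    (A : Matrix S S (Tropical ZInf)) (s r g : S) : Prop :=
  g ∈ MinStates (A ^ mfac S) ∧
  en (A ^ mfac S) s g < ⊤ ∧ en (A ^ mfac S) g r < ⊤ ∧
  ∀ g' ∈ MinStates (A ^ mfac S),
    en (A ^ mfac S) s g + en (A ^ mfac S) g r ≤
      en (A ^ mfac S) s g' + en (A ^ mfac S) g' r

/-- The stabilization `stab A`: its `(s, r)` entry is `(A^𝔪)_{s,g} + (A^𝔪)_{g,r}` where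
`g` is a grounding state of `(s, r)` if `(s, r)` is a grounded pair, and `∞` otherwise
(equivalently, the minimum of `(A^𝔪)_{s,g} + (A^𝔪)_{g,r}` over `g ∈ MinStates (A^𝔪)`). -/
noncomputable def stab {S : Type*} [Fintype S] [DecidableEq S]
    (A : Matrix S S (Tropical ZInf)) : Matrix S S (Tropical ZInf) :=
  Matrix.of fun s r =>
    Tropical.trop <|
      Finset.univ.inf fun g : S =>
        if en (A ^ mfac S) g g = 0 then en (A ^ mfac S) s g + en (A ^ mfac S) g r
        else ⊤

/-- A stable-cycle matrix `A` is degenerate if for every `s` and every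
`t ∈ RefStates (A^{2𝔪})`, whenever `(A^{2𝔪⬝k})_{s,t} < ∞` for some `k ≥ 1`, the pair
`(s, t)` is grounded. -/
def Degenerate {S : Type*} [Fintype S] [DecidableEq S]
    (A : Matrix S S (Tropical ZInf)) : Prop :=
  ∀ s t : S, t ∈ RefStates (A ^ (2 * mfac S)) →
    (∃ k : ℕ, 1 ≤ k ∧ en (A ^ (2 * mfac S * k)) s t < ⊤) → (s, t) ∈ GrnPairs A

set_option linter.unusedSectionVars false
namespace DegAux

open Finset Tropical

variable {S : Type*} [Fintype S] [DecidableEq S]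

/-- weight of a walk of length `L` along `f` -/
def wt (M : Matrix S S (Tropical ZInf)) (f : ℕ → S) (L : ℕ) : ZInf :=
  ∑ i ∈ Finset.range L, en M (f i) (f (i+1))

lemma wt_zero (M : Matrix S S (Tropical ZInf)) (f : ℕ → S) : wt M f 0 = 0 := by
  simp [wt]

lemma wt_succ (M : Matrix S S (Tropical ZInf)) (f : ℕ → S) (L : ℕ) :
    wt M f (L+1) = wt M f L + en M (f L) (f (L+1)) :=
  Finset.sum_range_succ _ _

lemma wt_congr {M : Matrix S S (Tropical ZInf)} {f g : ℕ → S} {L : ℕ}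
    (h : ∀ i ≤ L, f i = g i) : wt M f L = wt M g L := by
  unfold wt
  refine Finset.sum_congr rfl fun i hi => ?_
  rw [Finset.mem_range] at hi
  rw [h i (by omega), h (i+1) (by omega)]

lemma en_one_eq (s : S) : en (1 : Matrix S S (Tropical ZInf)) s s = 0 := by
  simp [en, Matrix.one_apply_eq]

lemma en_pow_zero (s : S) (M : Matrix S S (Tropical ZInf)) : en (M ^ 0) s s = 0 := by
  rw [pow_zero]; exact en_one_eq s

lemma en_mul (M N : Matrix S S (Tropical ZInf)) (s r : S) :
    en (M * N) s r = Finset.univ.inf (fun t => en M s t + en N t r) := by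
  unfold en
  rw [Matrix.mul_apply, Finset.untrop_sum']
  exact Finset.inf_congr rfl (fun t _ => untrop_mul _ _)

lemma en_mul_le (M N : Matrix S S (Tropical ZInf)) (s t r : S) :
    en (M * N) s r ≤ en M s t + en N t r := by
  rw [en_mul]; exact Finset.inf_le (Finset.mem_univ t)

lemma en_mul_exists (M N : Matrix S S (Tropical ZInf)) (s r : S) :
    ∃ t, en (M * N) s r = en M s t + en N t r := by
  rw [en_mul]
  obtain ⟨t, _, h⟩ := Finset.exists_mem_eq_inf (Finset.univ : Finset S)
    ⟨s, Finset.mem_univ s⟩ (fun t => en M s t + en N t r)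
  exact ⟨t, h⟩

lemma en_pow_add_le (M : Matrix S S (Tropical ZInf)) (p q : ℕ) (s t r : S) :
    en (M ^ (p + q)) s r ≤ en (M ^ p) s t + en (M ^ q) t r := by
  rw [pow_add]; exact en_mul_le _ _ _ _ _

/-- the min-plus power entry is a lower bound for walk weights -/
lemma en_pow_le_wt (M : Matrix S S (Tropical ZInf)) {f : ℕ → S} {L : ℕ} :
    en (M ^ L) (f 0) (f L) ≤ wt M f L := by
  induction L with
  | zero => rw [wt_zero, en_pow_zero]
  | succ L ih =>
      rw [wt_succ]
      calc en (M ^ (L+1)) (f 0) (f (L+1)) ≤ en (M ^ L) (f 0) (f L) + en (M ^ 1) (f L) (f (L+1)) :=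
            en_pow_add_le M L 1 _ _ _
        _ ≤ wt M f L + en (M ^ 1) (f L) (f (L+1)) := by gcongr
        _ = wt M f L + en M (f L) (f (L+1)) := by rw [pow_one]

/-- existence of an optimal walk -/
lemma exists_walk (M : Matrix S S (Tropical ZInf)) {L : ℕ} {s r : S}
    (h : en (M ^ L) s r ≠ ⊤) :
    ∃ f : ℕ → S, f 0 = s ∧ f L = r ∧ wt M f L = en (M ^ L) s r := by
  induction L generalizing r with
  | zero =>
      have hsr : s = r := by
        by_contra hne
        rw [pow_zero] at h
        exact h (by simp [en, Matrix.one_apply_ne hne, Tropical.untrop_zero])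
      subst hsr
      exact ⟨fun _ => s, rfl, rfl, by rw [wt_zero, en_pow_zero]⟩
  | succ L ih =>
      have h2 : en (M ^ (L + 1)) s r = en ((M ^ L) * M) s r := by rw [pow_succ]
      obtain ⟨t, ht⟩ := en_mul_exists (M ^ L) M s r
      rw [h2, ht] at h ⊢
      have h3 : en (M ^ L) s t ≠ ⊤ := fun hc => h (by rw [hc]; simp)
      have h4 : en M t r ≠ ⊤ := fun hc => h (by rw [hc]; simp)
      obtain ⟨f, hf0, hfL, hfw⟩ := ih h3
      refine ⟨fun i => if i ≤ L then f i else r, by simpa using hf0, by simp, ?_⟩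
      rw [wt_succ]
      have e1 : wt M (fun i => if i ≤ L then f i else r) L = wt M f L := by
        apply wt_congr
        intro i hi
        simp [hi]
      rw [e1, hfw]
      simp only [le_refl, if_pos, Nat.not_succ_le_self, if_neg, reduceIte]
      rw [hfL]


/-- splitting the weight of a walk -/
lemma wt_add (M : Matrix S S (Tropical ZInf)) (f : ℕ → S) (L1 L2 : ℕ) :
    wt M f (L1 + L2) = wt M f L1 + wt M (fun i => f (L1 + i)) L2 := by
  induction L2 with
  | zero => rw [wt_zero, add_zero, add_zero]
  | succ L2 ih =>
      rw [← Nat.add_assoc, wt_succ, ih, wt_succ, add_assoc]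
      rfl

/-- concatenation of two walks -/
lemma concat (M : Matrix S S (Tropical ZInf)) {f g : ℕ → S} {L1 L2 : ℕ} {s u r : S}
    (hf0 : f 0 = s) (hf1 : f L1 = u) (hg0 : g 0 = u) (hg1 : g L2 = r) :
    ∃ q : ℕ → S, q 0 = s ∧ q (L1 + L2) = r ∧ wt M q (L1 + L2) = wt M f L1 + wt M g L2 := by
  refine ⟨fun i => if i < L1 then f i else g (i - L1), ?_, ?_, ?_⟩
  · rcases Nat.eq_zero_or_pos L1 with h | h
    · subst h
      simpa [hg0] using (hf0 ▸ hf1).symm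
    · simp [h, hf0]
  · have h : ¬ (L1 + L2 < L1) := by omega
    simp only [h, if_neg, reduceIte]
    rw [← hg1]; congr 1; omega
  · rw [wt_add]
    congr 1
    · apply wt_congr
      intro i hi
      rcases Nat.lt_or_ge i L1 with h | h
      · simp [h]
      · have h1 : i = L1 := by omega
        subst h1
        simp [hg0, ← hf1]
    · apply wt_congr
      intro i _
      have h : ¬ (L1 + i < L1) := by omega
      simp only [h, if_neg, reduceIte]
      congr 1; omega

/-- deleting a closed segment `[a,b]` from a walk -/
lemma delete (M : Matrix S S (Tropical ZInf)) {f : ℕ → S} {L a b : ℕ}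
    (hab : a ≤ b) (hbL : b ≤ L) (hfab : f a = f b) :
    ∃ q : ℕ → S, q 0 = f 0 ∧ q (L - (b - a)) = f L ∧
      wt M q (L - (b - a)) + wt M (fun i => f (a + i)) (b - a) = wt M f L := by
  obtain ⟨q, hq0, hq1, hqw⟩ := concat M (f := f) (g := fun i => f (b + i))
    (L1 := a) (L2 := L - b) (r := f L) (rfl) (hfab) (by simp)
    (by show f (b + (L - b)) = f L
        congr 1
        omega)
  have hL : L = a + (b - a) + (L - b) := by omega
  have hlen0 : L - (b - a) = a + (L - b) := by omega
  refine ⟨q, hq0, ?_, ?_⟩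
  · rw [hlen0]; exact hq1
  have key : wt M f L = wt M f a + wt M (fun i => f (a + i)) (b - a) + wt M (fun i => f (b + i)) (L - b) := by
    conv_lhs => rw [hL]
    rw [wt_add, wt_add]
    congr 1
    apply wt_congr
    intro i _
    congr 1; omega
  rw [hlen0, hqw, key]
  exact add_right_comm _ _ _


/-- pigeonhole: two positions with the same state and the same residue mod `c` -/
lemma exists_repeat_mod (f : ℕ → S) (c L : ℕ) (hc : 0 < c)
    (h : Fintype.card S * c < L + 1) :
    ∃ i j, i < j ∧ j ≤ L ∧ f i = f j ∧ c ∣ (j - i) := by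
  have hcard : (Finset.univ : Finset (S × Fin c)).card < (Finset.range (L+1)).card := by
    rw [Finset.card_univ, Fintype.card_prod, Fintype.card_fin, Finset.card_range]
    exact h
  obtain ⟨i, hi, j, hj, hij, heq⟩ := Finset.exists_ne_map_eq_of_card_lt_of_maps_to hcard
    (f := fun i => ((f i, ⟨i % c, Nat.mod_lt i hc⟩) : S × Fin c))
    (fun i _ => Finset.mem_univ _)
  rw [Finset.mem_range] at hi hj
  have h1 : f i = f j := congrArg Prod.fst heq
  have h2 : i % c = j % c := by
    have := congrArg Prod.snd heq
    simpa using congrArg Fin.val this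
  rcases Nat.lt_or_ge i j with hlt | hge
  · exact ⟨i, j, hlt, by omega, h1, (Nat.modEq_iff_dvd' (le_of_lt hlt)).mp h2⟩
  · have hlt : j < i := by omega
    exact ⟨j, i, hlt, by omega, h1.symm, (Nat.modEq_iff_dvd' (le_of_lt hlt)).mp h2.symm⟩

/-- pigeonhole within the first `card S` steps -/
lemma exists_repeat (f : ℕ → S) :
    ∃ i j, i < j ∧ j ≤ Fintype.card S ∧ f i = f j := by
  obtain ⟨i, j, h1, h2, h3, _⟩ := exists_repeat_mod f 1 (Fintype.card S) one_pos (by omega)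
  exact ⟨i, j, h1, h2, h3⟩

lemma zinf_le_zero_of_add {x y : ZInf} (hx : x ≠ ⊤) (h : x + y ≤ x) : y ≤ 0 := by
  lift x to ℤ using hx
  induction y using WithTop.recTopCoe with
  | top => exact absurd (top_le_iff.mp (le_trans (by simp) h)) (by simp)
  | coe y =>
      rw [← WithTop.coe_add, WithTop.coe_le_coe] at h
      exact_mod_cast (by omega : y ≤ 0)

lemma zinf_eq_zero_left {x y : ZInf} (hx : 0 ≤ x) (hy : 0 ≤ y) (h : x + y = 0) : x = 0 := by
  have hxt : x ≠ ⊤ := by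
    intro hc; rw [hc, top_add] at h; exact (by simp : (⊤:ZInf) ≠ 0) h
  have hyt : y ≠ ⊤ := by
    intro hc; rw [hc, add_top] at h; exact (by simp : (⊤:ZInf) ≠ 0) h
  lift x to ℤ using hxt
  lift y to ℤ using hyt
  rw [← WithTop.coe_add] at h
  rw [show ((0:ZInf)) = ((0:ℤ):ZInf) from rfl] at h hx hy ⊢
  rw [WithTop.coe_le_coe] at hx hy
  rw [WithTop.coe_eq_coe] at h ⊢
  omega

lemma zinf_nsmul_ne_top {x : ZInf} (hx : x ≠ ⊤) (k : ℕ) : k • x ≠ ⊤ := by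
  induction k with
  | zero => simp
  | succ k ih =>
      rw [_root_.succ_nsmul]
      exact WithTop.add_ne_top.mpr ⟨ih, hx⟩

/-- iterating a closed walk -/
lemma cycle_pow (M : Matrix S S (Tropical ZInf)) {γ : ℕ → S} {c : ℕ} {g : S}
    (h0 : γ 0 = g) (h1 : γ c = g) (k : ℕ) :
    ∃ f : ℕ → S, f 0 = g ∧ f (k * c) = g ∧ wt M f (k * c) = k • wt M γ c := by
  induction k with
  | zero => exact ⟨fun _ => g, rfl, by simp [Nat.zero_mul], by rw [Nat.zero_mul, wt_zero, zero_nsmul]⟩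
  | succ k ih =>
      obtain ⟨f, hf0, hf1, hfw⟩ := ih
      obtain ⟨q, hq0, hq1, hqw⟩ := concat M h0 h1 hf0 hf1
      refine ⟨q, hq0, ?_, ?_⟩
      · rw [show (k+1) * c = c + k * c by ring]; exact hq1
      · rw [show (k+1) * c = c + k * c by ring, hqw, hfw, _root_.succ_nsmul, add_comm]


/-- LEMMA B : from a walk `s → g` of length divisible by `c` (`g` carrying a zero
cycle of length `c`), get the exact-length-`m` entry bound. -/
lemma reach_exact (M : Matrix S S (Tropical ZInf))
    (hdiag : ∀ L, 1 ≤ L → ∀ x : S, 0 ≤ en (M ^ L) x x)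
    {g s : S} {γ : ℕ → S} {c m : ℕ}
    (hγ0 : γ 0 = g) (hγ1 : γ c = g) (hγw : wt M γ c = 0)
    (hcn : c ≤ Fintype.card S)
    (hm : c ∣ m) (hnm : Fintype.card S * Fintype.card S ≤ m) :
    ∀ L, ∀ f : ℕ → S, f 0 = s → f L = g → c ∣ L → en (M ^ m) s g ≤ wt M f L := by
  intro L
  induction L using Nat.strong_induction_on with
  | _ L IH =>
    intro f hf0 hf1 hcL
    rcases le_or_gt L m with hLm | hLm
    · -- pad with copies of the zero cycle
      obtain ⟨k, hk⟩ : c ∣ m - L := Nat.dvd_sub hm hcL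
      obtain ⟨h, hh0, hh1, hhw⟩ := cycle_pow M hγ0 hγ1 k
      obtain ⟨q, hq0, hq1, hqw⟩ := concat M hf0 hf1 hh0 hh1
      have hmeq : m = L + k * c := by
        have : k * c = c * k := Nat.mul_comm _ _
        omega
      rw [hmeq]
      calc en (M ^ (L + k * c)) s g ≤ wt M q (L + k * c) := by
            rw [← hq0, ← hq1]; exact en_pow_le_wt M
        _ = wt M f L + k • wt M γ c := by rw [hqw, hhw]
        _ = wt M f L := by rw [hγw, smul_zero, add_zero]
    · -- delete a closed segment of length divisible by c
      have hm0 : 0 < m :=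
        lt_of_lt_of_le (Nat.mul_pos (Fintype.card_pos_iff.mpr ⟨g⟩) (Fintype.card_pos_iff.mpr ⟨g⟩)) hnm
      have hc : 0 < c := Nat.pos_of_dvd_of_pos hm hm0
      have hcard : Fintype.card S * c < L + 1 := by
        have h1 : Fintype.card S * c ≤ Fintype.card S * Fintype.card S :=
          Nat.mul_le_mul_left _ hcn
        exact Nat.lt_succ_of_lt (lt_of_le_of_lt (h1.trans hnm) hLm)
      obtain ⟨i, j, hij, hjL, hfij, hdvd⟩ := exists_repeat_mod f c L hc hcard
      obtain ⟨q, hq0, hq1, hqw⟩ := delete M (le_of_lt hij) hjL hfij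
      have hσ : 0 ≤ wt M (fun t => f (i + t)) (j - i) := by
        refine le_trans (hdiag (j - i) (by omega) (f i)) ?_
        have he : (fun t => f (i + t)) (j - i) = f i := by
          simp only; rw [show i + (j - i) = j by omega, hfij]
        calc en (M ^ (j-i)) (f i) (f i) = en (M ^ (j-i)) ((fun t => f (i + t)) 0) ((fun t => f (i + t)) (j-i)) := by
              rw [he]; simp
          _ ≤ wt M (fun t => f (i + t)) (j - i) := en_pow_le_wt M
      have hle : wt M q (L - (j - i)) ≤ wt M f L := by
        calc wt M q (L - (j - i)) = wt M q (L - (j - i)) + 0 := (add_zero _).symm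
          _ ≤ wt M q (L - (j - i)) + wt M (fun t => f (i + t)) (j - i) := by gcongr
          _ = wt M f L := hqw
      refine le_trans (IH (L - (j - i)) (by omega) q (hq0.trans hf0) (hq1.trans hf1) ?_) hle
      exact (Nat.dvd_sub hcL hdvd)


/-- LEMMA B\' : symmetric version, walks from `g` (which carries the zero cycle) to `r`. -/
lemma reach_exact' (M : Matrix S S (Tropical ZInf))
    (hdiag : ∀ L, 1 ≤ L → ∀ x : S, 0 ≤ en (M ^ L) x x)
    {g r : S} {γ : ℕ → S} {c m : ℕ}
    (hγ0 : γ 0 = g) (hγ1 : γ c = g) (hγw : wt M γ c = 0)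
    (hcn : c ≤ Fintype.card S)
    (hm : c ∣ m) (hnm : Fintype.card S * Fintype.card S ≤ m) :
    ∀ L, ∀ f : ℕ → S, f 0 = g → f L = r → c ∣ L → en (M ^ m) g r ≤ wt M f L := by
  intro L
  induction L using Nat.strong_induction_on with
  | _ L IH =>
    intro f hf0 hf1 hcL
    rcases le_or_gt L m with hLm | hLm
    · obtain ⟨k, hk⟩ : c ∣ m - L := Nat.dvd_sub hm hcL
      obtain ⟨h, hh0, hh1, hhw⟩ := cycle_pow M hγ0 hγ1 k
      obtain ⟨q, hq0, hq1, hqw⟩ := concat M hh0 hh1 hf0 hf1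
      have hmeq : m = k * c + L := by
        have : k * c = c * k := Nat.mul_comm _ _
        omega
      rw [hmeq]
      calc en (M ^ (k * c + L)) g r ≤ wt M q (k * c + L) := by
            rw [← hq0, ← hq1]; exact en_pow_le_wt M
        _ = k • wt M γ c + wt M f L := by rw [hqw, hhw]
        _ = wt M f L := by rw [hγw, smul_zero, zero_add]
    · have hm0 : 0 < m :=
        lt_of_lt_of_le (Nat.mul_pos (Fintype.card_pos_iff.mpr ⟨g⟩) (Fintype.card_pos_iff.mpr ⟨g⟩)) hnm
      have hc : 0 < c := Nat.pos_of_dvd_of_pos hm hm0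
      have hcard : Fintype.card S * c < L + 1 := by
        have h1 : Fintype.card S * c ≤ Fintype.card S * Fintype.card S :=
          Nat.mul_le_mul_left _ hcn
        exact Nat.lt_succ_of_lt (lt_of_le_of_lt (h1.trans hnm) hLm)
      obtain ⟨i, j, hij, hjL, hfij, hdvd⟩ := exists_repeat_mod f c L hc hcard
      obtain ⟨q, hq0, hq1, hqw⟩ := delete M (le_of_lt hij) hjL hfij
      have hσ : 0 ≤ wt M (fun t => f (i + t)) (j - i) := by
        refine le_trans (hdiag (j - i) (by omega) (f i)) ?_
        have he : (fun t => f (i + t)) (j - i) = f i := by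
          simp only; rw [show i + (j - i) = j by omega, hfij]
        calc en (M ^ (j-i)) (f i) (f i) = en (M ^ (j-i)) ((fun t => f (i + t)) 0) ((fun t => f (i + t)) (j-i)) := by
              rw [he]; simp
          _ ≤ wt M (fun t => f (i + t)) (j - i) := en_pow_le_wt M
      have hle : wt M q (L - (j - i)) ≤ wt M f L := by
        calc wt M q (L - (j - i)) = wt M q (L - (j - i)) + 0 := (add_zero _).symm
          _ ≤ wt M q (L - (j - i)) + wt M (fun t => f (i + t)) (j - i) := by gcongr
          _ = wt M f L := hqw
      refine le_trans (IH (L - (j - i)) (by omega) q (hq0.trans hf0) (hq1.trans hf1) ?_) hle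
      exact (Nat.dvd_sub hcL hdvd)

/-- extract a short closed walk (length ≤ |S|) of finite weight from a finite-weight closed walk -/
lemma extract_cycle_fin (M : Matrix S S (Tropical ZInf))
    (hdiag : ∀ L, 1 ≤ L → ∀ x : S, 0 ≤ en (M ^ L) x x) {w : S} :
    ∀ Λ, 1 ≤ Λ → ∀ f : ℕ → S, f 0 = w → f Λ = w → wt M f Λ ≠ ⊤ →
    ∃ (γ : ℕ → S) (c : ℕ), 1 ≤ c ∧ c ≤ Fintype.card S ∧ γ 0 = w ∧ γ c = w ∧ wt M γ c ≠ ⊤ := by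
  intro Λ
  induction Λ using Nat.strong_induction_on with
  | _ Λ IH =>
    intro hΛ f hf0 hf1 hfw
    rcases le_or_gt Λ (Fintype.card S) with h | h
    · exact ⟨f, Λ, hΛ, h, hf0, hf1, hfw⟩
    · obtain ⟨i, j, hij, hjn, hfij⟩ := exists_repeat f
      have hjΛ : j ≤ Λ := le_of_lt (lt_of_le_of_lt hjn h)
      obtain ⟨q, hq0, hq1, hqw⟩ := delete M (le_of_lt hij) hjΛ hfij
      have hqt : wt M q (Λ - (j - i)) ≠ ⊤ := by
        intro hc
        rw [hc, top_add] at hqw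
        exact hfw hqw.symm
      exact IH (Λ - (j - i)) (by omega) (by omega) q (hq0.trans hf0) (hq1.trans hf1) hqt

/-- extract a short zero-weight closed walk from a zero-weight closed walk -/
lemma extract_cycle_zero (M : Matrix S S (Tropical ZInf))
    (hdiag : ∀ L, 1 ≤ L → ∀ x : S, 0 ≤ en (M ^ L) x x) {w : S} :
    ∀ Λ, 1 ≤ Λ → ∀ f : ℕ → S, f 0 = w → f Λ = w → wt M f Λ = 0 →
    ∃ (γ : ℕ → S) (c : ℕ), 1 ≤ c ∧ c ≤ Fintype.card S ∧ γ 0 = w ∧ γ c = w ∧ wt M γ c = 0 := by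
  intro Λ
  induction Λ using Nat.strong_induction_on with
  | _ Λ IH =>
    intro hΛ f hf0 hf1 hfw
    rcases le_or_gt Λ (Fintype.card S) with h | h
    · exact ⟨f, Λ, hΛ, h, hf0, hf1, hfw⟩
    · obtain ⟨i, j, hij, hjn, hfij⟩ := exists_repeat f
      have hjΛ : j ≤ Λ := le_of_lt (lt_of_le_of_lt hjn h)
      obtain ⟨q, hq0, hq1, hqw⟩ := delete M (le_of_lt hij) hjΛ hfij
      have hσ : 0 ≤ wt M (fun t => f (i + t)) (j - i) := by
        refine le_trans (hdiag (j - i) (by omega) (f i)) ?_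
        have he : (fun t => f (i + t)) (j - i) = f i := by
          simp only; rw [show i + (j - i) = j by omega, hfij]
        calc en (M ^ (j-i)) (f i) (f i) = en (M ^ (j-i)) ((fun t => f (i + t)) 0) ((fun t => f (i + t)) (j-i)) := by
              rw [he]; simp
          _ ≤ wt M (fun t => f (i + t)) (j - i) := en_pow_le_wt M
      have hq : 0 ≤ wt M q (Λ - (j - i)) := by
        have h1 : en (M ^ (Λ - (j-i))) (q 0) (q (Λ - (j-i))) ≤ wt M q (Λ - (j-i)) :=
          en_pow_le_wt M
        rw [hq0.trans hf0, hq1.trans hf1] at h1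
        exact le_trans (hdiag _ (by omega) w) h1
      have hqz : wt M q (Λ - (j - i)) = 0 :=
        zinf_eq_zero_left hq hσ (hqw.trans hfw)
      exact IH (Λ - (j - i)) (by omega) (by omega) q (hq0.trans hf0) (hq1.trans hf1) hqz


section Ctx

variable {A : Matrix S S (Tropical ZInf)} {s₀ : S} {C : ℕ}

lemma card_le_mfac (x : S) : Fintype.card S ≤ mfac S := by
  have h1 : 1 ≤ Fintype.card S := Fintype.card_pos_iff.mpr ⟨x⟩
  have h2 : 1 ≤ nfac S := Nat.one_le_iff_ne_zero.mpr (Nat.factorial_ne_zero _)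
  calc Fintype.card S = Fintype.card S * 1 := (Nat.mul_one _).symm
    _ ≤ mfac S := Nat.mul_le_mul_left _ h2

lemma sq_card_le_mfac (x : S) : Fintype.card S * Fintype.card S ≤ mfac S := by
  exact Nat.mul_le_mul_left _ (Nat.self_le_factorial _)

lemma one_le_mfac (x : S) : 1 ≤ mfac S := by
  have h1 : 1 ≤ Fintype.card S := Fintype.card_pos_iff.mpr ⟨x⟩
  calc 1 ≤ Fintype.card S := h1
    _ ≤ mfac S := card_le_mfac x

lemma dvd_mfac {c : ℕ} (hc1 : 1 ≤ c) (hcn : c ≤ Fintype.card S) : c ∣ mfac S :=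
  dvd_mul_of_dvd_right (Nat.dvd_factorial hc1 hcn) _

lemma hdiag_of (hA : IsStableCycle A s₀) : ∀ L, 1 ≤ L → ∀ x : S, 0 ≤ en (A ^ L) x x :=
  fun L hL x => (hA L hL).2 x

lemma minstate_pow_zero (hA : IsStableCycle A s₀) {g : S}
    (hg : en (A ^ mfac S) g g = 0) : ∀ k, 1 ≤ k → en (A ^ (mfac S * k)) g g = 0 := by
  intro k hk
  have hub : ∀ k, 1 ≤ k → en (A ^ (mfac S * k)) g g ≤ 0 := by
    intro k hk
    induction k with
    | zero => omega
    | succ k ih =>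
        rcases Nat.eq_zero_or_pos k with h0 | h0
        · subst h0; simpa using le_of_eq hg
        · calc en (A ^ (mfac S * (k+1))) g g
              ≤ en (A ^ (mfac S * k)) g g + en (A ^ mfac S) g g := by
                rw [Nat.mul_succ]; exact en_pow_add_le A _ _ _ _ _
            _ ≤ 0 + 0 := add_le_add (ih h0) (le_of_eq hg)
            _ = 0 := add_zero _
  refine le_antisymm (hub k hk) ?_
  refine hdiag_of hA _ ?_ g
  have := one_le_mfac g
  exact Nat.one_le_iff_ne_zero.mpr (by positivity)

lemma two_step (hA : IsStableCycle A s₀) {g : S} (hg : en (A ^ mfac S) g g = 0)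
    (s r : S) {j : ℕ} (hj : 2 ≤ j) :
    en (A ^ (mfac S * j)) s r ≤ en (A ^ mfac S) s g + en (A ^ mfac S) g r := by
  have hmid : en (A ^ (mfac S * (j - 2))) g g = 0 := by
    rcases Nat.eq_zero_or_pos (j - 2) with h0 | h0
    · rw [h0, Nat.mul_zero]; exact en_pow_zero g A
    · exact minstate_pow_zero hA hg _ h0
  have hsplit : mfac S * j = (mfac S + mfac S * (j - 2)) + mfac S := by
    obtain ⟨d, rfl⟩ : ∃ d, j = d + 2 := ⟨j - 2, by omega⟩
    rw [show d + 2 - 2 = d from by omega]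
    ring
  rw [hsplit]
  calc en (A ^ ((mfac S + mfac S * (j - 2)) + mfac S)) s r
      ≤ en (A ^ (mfac S + mfac S * (j - 2))) s g + en (A ^ mfac S) g r :=
        en_pow_add_le A _ _ _ _ _
    _ ≤ (en (A ^ mfac S) s g + en (A ^ (mfac S * (j - 2))) g g) + en (A ^ mfac S) g r := by
        gcongr
        exact en_pow_add_le A _ _ _ _ _
    _ = en (A ^ mfac S) s g + en (A ^ mfac S) g r := by rw [hmid, add_zero]

lemma en_stab (s r : S) :
    en (stab A) s r = Finset.univ.inf (fun g : S =>
      if en (A ^ mfac S) g g = 0 then en (A ^ mfac S) s g + en (A ^ mfac S) g r else ⊤) := by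
  unfold stab en
  rw [Matrix.of_apply, untrop_trop]

lemma pow_le_stab (hA : IsStableCycle A s₀) (s r : S) {j : ℕ} (hj : 2 ≤ j) :
    en (A ^ (mfac S * j)) s r ≤ en (stab A) s r := by
  rw [en_stab]
  refine Finset.le_inf fun g _ => ?_
  by_cases hg : en (A ^ mfac S) g g = 0
  · rw [if_pos hg]; exact two_step hA hg s r hj
  · rw [if_neg hg]; exact le_top


lemma edge_lb (hC : ∀ (s r : S) (c : ℤ), en A s r = (c : ZInf) → c.natAbs ≤ C)
    (x y : S) : ((-(C : ℤ) : ℤ) : ZInf) ≤ en A x y := by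
  cases h : en A x y with
  | none => exact le_top
  | some v =>
      have hv := hC x y v (by rw [h]; rfl)
      have : -(C : ℤ) ≤ v := by omega
      simpa only [WithTop.some_eq_coe, WithTop.coe_le_coe] using this

lemma edge_ub (hC : ∀ (s r : S) (c : ℤ), en A s r = (c : ZInf) → c.natAbs ≤ C)
    {x y : S} (h : en A x y ≠ ⊤) : en A x y ≤ ((C : ℤ) : ZInf) := by
  cases hh : en A x y with
  | none => exact absurd hh h
  | some v =>
      have hv := hC x y v (by rw [hh]; rfl)
      have : v ≤ (C : ℤ) := by omega
      simpa only [WithTop.some_eq_coe, WithTop.coe_le_coe] using this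

lemma wt_lb (hC : ∀ (s r : S) (c : ℤ), en A s r = (c : ZInf) → c.natAbs ≤ C)
    (f : ℕ → S) (L : ℕ) : ((-(L * C : ℕ) : ℤ) : ZInf) ≤ wt A f L := by
  induction L with
  | zero => rw [wt_zero]; exact_mod_cast (by simp : -((0 : ℕ) * C : ℕ) ≤ (0:ℤ))
  | succ L ih =>
      rw [wt_succ]
      calc ((-(((L+1) * C : ℕ)) : ℤ) : ZInf) = ((-(L * C : ℕ) : ℤ) : ZInf) + ((-(C:ℤ) : ℤ) : ZInf) := by
            rw [← WithTop.coe_add]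
            congr 1
            push_cast
            ring
        _ ≤ wt A f L + en A (f L) (f (L+1)) := add_le_add ih (edge_lb hC _ _)

lemma wt_ub_of_fin (hC : ∀ (s r : S) (c : ℤ), en A s r = (c : ZInf) → c.natAbs ≤ C)
    (f : ℕ → S) (L : ℕ) (h : wt A f L ≠ ⊤) : wt A f L ≤ (((L * C : ℕ) : ℤ) : ZInf) := by
  induction L with
  | zero => rw [wt_zero]; exact_mod_cast (by simp : (0:ℤ) ≤ ((0 : ℕ) * C : ℕ))
  | succ L ih =>
      rw [wt_succ] at h ⊢
      have h1 : wt A f L ≠ ⊤ := fun hc => h (by rw [hc, top_add])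
      have h2 : en A (f L) (f (L+1)) ≠ ⊤ := fun hc => h (by rw [hc, add_top])
      calc wt A f L + en A (f L) (f (L+1)) ≤ (((L * C : ℕ) : ℤ) : ZInf) + ((C : ℤ) : ZInf) :=
            add_le_add (ih h1) (edge_ub hC h2)
        _ = ((((L+1) * C : ℕ) : ℤ) : ZInf) := by
            rw [← WithTop.coe_add]
            congr 1
            push_cast
            ring

/-- uniform lower bound on all entries of all powers -/
lemma pow_lb (hA : IsStableCycle A s₀)
    (hC : ∀ (s r : S) (c : ℤ), en A s r = (c : ZInf) → c.natAbs ≤ C) :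
    ∀ L, ∀ s r : S, ((-(mfac S * C : ℕ) : ℤ) : ZInf) ≤ en (A ^ L) s r := by
  intro L
  induction L using Nat.strong_induction_on with
  | _ L IH =>
    intro s r
    by_cases htop : en (A ^ L) s r = ⊤
    · rw [htop]; exact le_top
    obtain ⟨f, hf0, hf1, hfw⟩ := exists_walk A htop
    rcases le_or_gt L (mfac S) with hL | hL
    · rw [← hfw]
      refine le_trans ?_ (wt_lb hC f L)
      have : (L * C : ℕ) ≤ (mfac S * C : ℕ) := Nat.mul_le_mul_right _ hL
      exact_mod_cast (by omega : -((mfac S * C : ℕ) : ℤ) ≤ -((L * C : ℕ) : ℤ))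
    · obtain ⟨i, j, hij, hjn, hfij⟩ := exists_repeat f
      have hjL : j ≤ L := le_of_lt (lt_of_le_of_lt (hjn.trans (card_le_mfac s)) hL)
      obtain ⟨q, hq0, hq1, hqw⟩ := delete A (le_of_lt hij) hjL hfij
      have hσ : 0 ≤ wt A (fun t => f (i + t)) (j - i) := by
        refine le_trans (hdiag_of hA (j - i) (by omega) (f i)) ?_
        have he : (fun t => f (i + t)) (j - i) = f i := by
          simp only; rw [show i + (j - i) = j by omega, hfij]
        calc en (A ^ (j-i)) (f i) (f i)
            = en (A ^ (j-i)) ((fun t => f (i + t)) 0) ((fun t => f (i + t)) (j-i)) := by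
              rw [he]; simp
          _ ≤ wt A (fun t => f (i + t)) (j - i) := en_pow_le_wt A
      calc ((-(mfac S * C : ℕ) : ℤ) : ZInf) ≤ en (A ^ (L - (j - i))) s r := IH _ (by omega) s r
        _ ≤ wt A q (L - (j - i)) := by rw [← hq0.trans hf0, ← hq1.trans hf1]; exact en_pow_le_wt A
        _ = wt A q (L - (j - i)) + 0 := (add_zero _).symm
        _ ≤ wt A q (L - (j - i)) + wt A (fun t => f (i + t)) (j - i) := by gcongr
        _ = wt A f L := hqw
        _ = en (A ^ L) s r := hfw

/-- finite entries of `A^L` are at most `L⬝C` -/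
lemma pow_ub_of_fin (hC : ∀ (s r : S) (c : ℤ), en A s r = (c : ZInf) → c.natAbs ≤ C)
    {L : ℕ} {s r : S} (h : en (A ^ L) s r ≠ ⊤) : en (A ^ L) s r ≤ (((L * C : ℕ) : ℤ) : ZInf) := by
  obtain ⟨f, hf0, hf1, hfw⟩ := exists_walk A h
  rw [← hfw]
  exact wt_ub_of_fin hC f L (by rw [hfw]; exact h)


/-- finite entries of big even powers give grounded pairs (uses degeneracy) -/
lemma fin_grounded (hA : IsStableCycle A s₀) (hdeg : Degenerate A)
    {j : ℕ} (hj : 1 ≤ j) {s r : S}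
    (hfin : en (A ^ (2 * mfac S * Fintype.card S * j)) s r ≠ ⊤) :
    (s, r) ∈ GrnPairs A := by
  have hm1 : 1 ≤ mfac S := one_le_mfac s
  have hn1 : 1 ≤ Fintype.card S := Fintype.card_pos_iff.mpr ⟨s⟩
  obtain ⟨f, hf0, hf1, hfw⟩ := exists_walk A hfin
  obtain ⟨i, i', hii, hi'n, hFii⟩ := exists_repeat (fun u => f (2 * mfac S * u))
  have hFii2 : f (2 * mfac S * i) = f (2 * mfac S * i') := hFii
  set n := Fintype.card S with hn
  set m := mfac S with hmm
  set N := 2 * m * n * j with hN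
  set a := 2 * m * i with ha
  set b := 2 * m * i' with hb
  set t := f a with ht
  have htb : f b = t := hFii2.symm
  have hbN : b ≤ N := by
    have h1 : 2 * m * i' ≤ 2 * m * n := Nat.mul_le_mul_left _ hi'n
    have h2 : 2 * m * n ≤ 2 * m * n * j := Nat.le_mul_of_pos_right _ hj
    omega
  have hab : a < b := by
    have h1 : 2 * m * i < 2 * m * i' := by
      exact Nat.mul_lt_mul_of_le_of_lt (le_refl (2*m)) hii (by omega)
    omega
  -- weight splitting
  have hsplit : wt A f N =
      wt A f a + (wt A (fun u => f (a + u)) (b - a) + wt A (fun u => f (b + u)) (N - b)) := by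
    conv_lhs => rw [show N = a + (N - a) from by omega]
    rw [wt_add]
    congr 1
    have h2 : wt A (fun u => f (a + u)) (N - a) =
        wt A (fun u => f (a + u)) (b - a) + wt A (fun u => f (a + ((b - a) + u))) (N - b) := by
      conv_lhs => rw [show N - a = (b - a) + (N - b) from by omega]
      rw [wt_add]
    rw [h2]
    congr 1
    apply wt_congr
    intro u _
    have : a + ((b - a) + u) = b + u := by omega
    rw [this]
  set P := wt A f a with hP
  set σ := wt A (fun u => f (a + u)) (b - a) with hσdef
  set Q := wt A (fun u => f (b + u)) (N - b) with hQdef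
  have htot : P + (σ + Q) ≠ ⊤ := by rw [← hsplit, hfw]; exact hfin
  have hPfin : P ≠ ⊤ := fun hc => htot (by rw [hc, top_add])
  have hσfin : σ ≠ ⊤ := fun hc => htot (by rw [hc, top_add, add_top])
  have hQfin : Q ≠ ⊤ := fun hc => htot (by rw [hc, add_top, add_top])
  -- the closed walk at t
  have hg10 : (fun u => f (a + u)) 0 = t := by simp only [Nat.add_zero, ht]
  have hg11 : (fun u => f (a + u)) (b - a) = t := by
    simp only; rw [show a + (b - a) = b from by omega, htb]
  -- t is a refinement state
  obtain ⟨γt, ct, hct1, hctn, hγt0, hγt1, hγtw⟩ :=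
    extract_cycle_fin A (hdiag_of hA) (b - a) (by omega) _ hg10 hg11 (by rw [← hσdef]; exact hσfin)
  have hctm : ct ∣ 2 * m := Dvd.dvd.mul_left (dvd_mfac hct1 hctn) 2
  have htRef : t ∈ RefStates (A ^ (2 * m)) := by
    obtain ⟨h2, hh0, hh1, hhw⟩ := cycle_pow A hγt0 hγt1 ((2 * m) / ct)
    have hlen : (2 * m) / ct * ct = 2 * m := Nat.div_mul_cancel hctm
    rw [hlen] at hh1 hhw
    have : en (A ^ (2 * m)) t t ≤ wt A h2 (2 * m) := by
      have h3 : en (A ^ (2 * m)) (h2 0) (h2 (2 * m)) ≤ wt A h2 (2 * m) := en_pow_le_wt A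
      rw [hh0, hh1] at h3
      exact h3
    have hne : wt A h2 (2 * m) ≠ ⊤ := by
      rw [hhw]; exact zinf_nsmul_ne_top hγtw _
    exact lt_of_le_of_lt this (lt_top_iff_ne_top.mpr hne)
  -- s reaches t in a multiple of 2m steps
  have hreach : ∃ k : ℕ, 1 ≤ k ∧ en (A ^ (2 * m * k)) s t < ⊤ := by
    rcases Nat.eq_zero_or_pos i with h0 | h0
    · refine ⟨i', by omega, ?_⟩
      have ha0 : a = 0 := by rw [ha, h0, Nat.mul_zero]
      have hts : t = s := by rw [ht, ha0, hf0]
      have h1 : en (A ^ (b - a)) ((fun u => f (a + u)) 0) ((fun u => f (a + u)) (b - a)) ≤ σ :=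
        en_pow_le_wt A
      rw [hg10, hg11] at h1
      have h2 : b - a = 2 * m * i' := by omega
      rw [h2] at h1
      rw [← hts]
      exact lt_of_le_of_lt h1 (lt_top_iff_ne_top.mpr hσfin)
    · refine ⟨i, h0, ?_⟩
      have h1 : en (A ^ a) s t ≤ P := by
        have h3 : en (A ^ a) (f 0) (f a) ≤ wt A f a := en_pow_le_wt A
        rw [hf0] at h3
        exact h3
      exact lt_of_le_of_lt h1 (lt_top_iff_ne_top.mpr hPfin)
  obtain ⟨g, hgmin, hsg, hgt⟩ := hdeg s t htRef hreach
  have hgg : en (A ^ m) g g = 0 := hgmin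
  -- build a walk from g to r of length m + (N - b)
  obtain ⟨w1, hw10, hw11, hw1w⟩ := exists_walk A (ne_top_of_lt hgt)
  obtain ⟨q, hq0, hq1, hqw⟩ := concat A hw10 hw11
    (g := fun u => f (b + u)) (by simp only [Nat.add_zero, htb]) (by rw [show b + (N - b) = N from by omega, hf1])
  have hqfin : wt A q (m + (N - b)) ≠ ⊤ := by
    rw [hqw, hw1w]
    exact WithTop.add_ne_top.mpr ⟨ne_top_of_lt hgt, hQfin⟩
  -- zero cycle at g
  obtain ⟨z, hz0, hz1, hzw⟩ := exists_walk A (L := m) (s := g) (r := g)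
    (by rw [hgg]; exact (by simp : (0 : ZInf) ≠ ⊤))
  obtain ⟨γ, cg, hcg1, hcgn, hγ0, hγ1, hγw⟩ :=
    extract_cycle_zero A (hdiag_of hA) m (by omega) z hz0 hz1 (by rw [hzw, hgg])
  have hcgm : cg ∣ m := dvd_mfac hcg1 hcgn
  have hcgL : cg ∣ m + (N - b) := by
    refine Nat.dvd_add hcgm (Nat.dvd_sub ?_ ?_)
    · exact Dvd.dvd.trans hcgm ⟨2 * n * j, by rw [hN]; ring⟩
    · exact Dvd.dvd.trans hcgm ⟨2 * i', by rw [hb]; ring⟩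
  have hgr : en (A ^ m) g r ≤ wt A q (m + (N - b)) :=
    reach_exact' A (hdiag_of hA) hγ0 hγ1 hγw hcgn hcgm (sq_card_le_mfac s) _ q hq0 hq1 hcgL
  exact ⟨g, hgmin, hsg, lt_of_le_of_lt hgr (lt_top_iff_ne_top.mpr hqfin)⟩


/-- all entries of the relevant powers lie in a small finite set -/
lemma entry_mem (hA : IsStableCycle A s₀) (hdeg : Degenerate A)
    (hC : ∀ (s r : S) (c : ℤ), en A s r = (c : ZInf) → c.natAbs ≤ C)
    {j : ℕ} (hj : 1 ≤ j) (s r : S) :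
    en (A ^ (2 * mfac S * Fintype.card S * j)) s r ∈
      insert (⊤ : ZInf) ((Finset.Icc (-((2 * mfac S * C : ℕ) : ℤ)) ((2 * mfac S * C : ℕ) : ℤ)).image
        (fun v : ℤ => (v : ZInf))) := by
  by_cases htop : en (A ^ (2 * mfac S * Fintype.card S * j)) s r = ⊤
  · rw [htop]; exact Finset.mem_insert_self _ _
  obtain ⟨g, hgmin, hsg, hgr⟩ := fin_grounded hA hdeg hj htop
  have hgg : en (A ^ mfac S) g g = 0 := hgmin
  have hexp : 2 * mfac S * Fintype.card S * j = mfac S * (2 * Fintype.card S * j) := by ring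
  have hn1 : 1 ≤ Fintype.card S := Fintype.card_pos_iff.mpr ⟨s⟩
  have hub : en (A ^ (2 * mfac S * Fintype.card S * j)) s r ≤ ((2 * mfac S * C : ℕ) : ℤ) := by
    rw [hexp]
    refine le_trans (two_step hA hgg s r (by nlinarith)) ?_
    have h1 : en (A ^ mfac S) s g ≤ ((mfac S * C : ℕ) : ℤ) := pow_ub_of_fin hC (ne_top_of_lt hsg)
    have h2 : en (A ^ mfac S) g r ≤ ((mfac S * C : ℕ) : ℤ) := pow_ub_of_fin hC (ne_top_of_lt hgr)
    calc en (A ^ mfac S) s g + en (A ^ mfac S) g r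
        ≤ (((mfac S * C : ℕ) : ℤ) : ZInf) + (((mfac S * C : ℕ) : ℤ) : ZInf) := add_le_add h1 h2
      _ = (((2 * mfac S * C : ℕ) : ℤ) : ZInf) := by
          rw [← WithTop.coe_add]; congr 1; push_cast; ring
  have hlb : ((-((2 * mfac S * C : ℕ) : ℤ)) : ZInf) ≤ en (A ^ (2 * mfac S * Fintype.card S * j)) s r := by
    refine le_trans ?_ (pow_lb hA hC _ s r)
    have : ((mfac S * C : ℕ) : ℤ) ≤ ((2 * mfac S * C : ℕ) : ℤ) := by push_cast; nlinarith
    exact_mod_cast (by omega : -((2 * mfac S * C : ℕ) : ℤ) ≤ -((mfac S * C : ℕ) : ℤ))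
  cases h : en (A ^ (2 * mfac S * Fintype.card S * j)) s r with
  | none => exact absurd h htop
  | some v =>
      rw [h] at hub hlb
      refine Finset.mem_insert_of_mem (Finset.mem_image.mpr ⟨v, Finset.mem_Icc.mpr ⟨?_, ?_⟩, rfl⟩)
      · rw [WithTop.some_eq_coe] at hlb; exact_mod_cast hlb
      · rw [WithTop.some_eq_coe] at hub; exact_mod_cast hub


/-- pigeonhole: an idempotent power within the required bound -/
lemma exists_idem (hA : IsStableCycle A s₀) (hdeg : Degenerate A)
    (hC : ∀ (s r : S) (c : ℤ), en A s r = (c : ZInf) → c.natAbs ≤ C) :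
    ∃ t : ℕ, 1 ≤ t ∧ t ≤ (2 + 4 * mfac S * C) ^ (Fintype.card S ^ 2) ∧
      (A ^ (2 * mfac S * Fintype.card S)) ^ (t + t) = (A ^ (2 * mfac S * Fintype.card S)) ^ t := by
  set n := Fintype.card S with hn
  set Nb := (2 + 4 * mfac S * C) ^ (n ^ 2) with hNb
  set F : Finset ZInf := insert (⊤ : ZInf)
    ((Finset.Icc (-((2 * mfac S * C : ℕ) : ℤ)) ((2 * mfac S * C : ℕ) : ℤ)).image
      (fun v : ℤ => (v : ZInf))) with hF
  have hFcard : F.card ≤ 2 + 4 * mfac S * C := by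
    refine le_trans (Finset.card_insert_le _ _) ?_
    have h1 := Finset.card_image_le (s := Finset.Icc (-((2 * mfac S * C : ℕ) : ℤ))
      ((2 * mfac S * C : ℕ) : ℤ)) (f := fun v : ℤ => (v : ZInf))
    have h2 : (Finset.Icc (-((2 * mfac S * C : ℕ) : ℤ)) ((2 * mfac S * C : ℕ) : ℤ)).card
        = 4 * mfac S * C + 1 := by
      rw [Int.card_Icc]
      have : ((2 * mfac S * C : ℕ) : ℤ) + 1 - (-((2 * mfac S * C : ℕ) : ℤ))
          = ((4 * mfac S * C + 1 : ℕ) : ℤ) := by push_cast; ring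
      rw [this, Int.toNat_natCast]
    omega
  classical
  set φ : Fin (Nb + 1) → ((S × S) → {x // x ∈ F}) := fun i p =>
    ⟨en (A ^ (2 * mfac S * n * (i.1 + 1))) p.1 p.2,
      entry_mem hA hdeg hC (by omega) p.1 p.2⟩ with hφ
  have hcards : Fintype.card ((S × S) → {x // x ∈ F}) < Fintype.card (Fin (Nb + 1)) := by
    rw [Fintype.card_fin, Fintype.card_fun, Fintype.card_coe, Fintype.card_prod]
    calc F.card ^ (Fintype.card S * Fintype.card S)
        ≤ (2 + 4 * mfac S * C) ^ (Fintype.card S * Fintype.card S) :=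
          Nat.pow_le_pow_left hFcard _
      _ = Nb := by rw [hNb, hn, pow_two]
      _ < Nb + 1 := Nat.lt_succ_self _
  obtain ⟨i, i', hii, hφeq⟩ := Fintype.exists_ne_map_eq_of_card_lt φ hcards
  have hMeq : ∀ (k k' : Fin (Nb + 1)), φ k = φ k' →
      A ^ (2 * mfac S * n * (k.1 + 1)) = A ^ (2 * mfac S * n * (k'.1 + 1)) := by
    intro k k' hkk
    ext s r
    exact untrop_injective (congrArg Subtype.val (congrFun hkk (s, r)))
  -- order the two indices
  obtain ⟨m₁, m₂, hm1, hm12, hm2Nb, hBB⟩ :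
      ∃ m₁ m₂, 1 ≤ m₁ ∧ m₁ < m₂ ∧ m₂ ≤ Nb + 1 ∧
        A ^ (2 * mfac S * n * m₁) = A ^ (2 * mfac S * n * m₂) := by
    rcases Nat.lt_or_ge i.1 i'.1 with h | h
    · exact ⟨i.1 + 1, i'.1 + 1, by omega, by omega, by omega, hMeq i i' hφeq⟩
    · have hne : i.1 ≠ i'.1 := fun hc => hii (Fin.ext hc)
      exact ⟨i'.1 + 1, i.1 + 1, by omega, by omega, by omega, hMeq i' i hφeq.symm⟩
  set B := A ^ (2 * mfac S * n) with hB
  have hBpow : ∀ k : ℕ, A ^ (2 * mfac S * n * k) = B ^ k := fun k => pow_mul A _ k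
  rw [hBpow, hBpow] at hBB
  set d := m₂ - m₁ with hd
  have hd1 : 1 ≤ d := by omega
  have hper : ∀ u : ℕ, B ^ (m₁ + u) = B ^ (m₁ + u + d) := by
    intro u
    have h1 : B ^ (m₁ + u) = B ^ m₁ * B ^ u := pow_add B m₁ u
    have h2 : m₁ + u + d = m₂ + u := by omega
    rw [h1, hBB, ← pow_add, h2]
  have hperk : ∀ k u : ℕ, B ^ (m₁ + u) = B ^ (m₁ + u + k * d) := by
    intro k
    induction k with
    | zero => intro u; rw [Nat.zero_mul, Nat.add_zero]
    | succ k ih =>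
        intro u
        have h3 : (k + 1) * d = k * d + d := by ring
        have h4 : m₁ + u + (k + 1) * d = m₁ + (u + k * d) + d := by omega
        rw [h4, ← hper (u + k * d), show m₁ + (u + k * d) = m₁ + u + k * d from by omega, ← ih u]
  set q := (m₁ + d - 1) / d with hq
  have hdm : d * q + (m₁ + d - 1) % d = m₁ + d - 1 := Nat.div_add_mod _ _
  have hmod : (m₁ + d - 1) % d < d := Nat.mod_lt _ (by omega)
  set t := d * q with htdef
  have hm₁t : m₁ ≤ t := by omega
  have htub : t ≤ m₁ + d - 1 := by omega
  refine ⟨t, by omega, by omega, ?_⟩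
  have hqd : q * d = d * q := by ring
  have h5 : t + t = m₁ + (t - m₁) + q * d := by omega
  rw [h5, ← hperk q (t - m₁), show m₁ + (t - m₁) = t from by omega]

end Ctx
end DegAux

open DegAux

/-- **Degenerate cycles can be cheaply unfolded**: if `A` is a degenerate stable-cycle
matrix whose finite entries are bounded by `C ≥ 1` in absolute value, then there is
`1 ≤ m ≤ (2 + 4𝔪C)^{|S|²}` with `A^{2𝔪⬝|S|⬝m} = stab A` (including `∞` entries). -/
theorem degenerate_cycle_pow_eq_stab {S : Type*} [Fintype S] [DecidableEq S]
    (A : Matrix S S (Tropical ZInf)) (s₀ : S) (hA : IsStableCycle A s₀)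
    (hdeg : Degenerate A) (C : ℕ) (hC1 : 1 ≤ C)
    (hC : ∀ (s r : S) (c : ℤ), en A s r = (c : ZInf) → c.natAbs ≤ C) :
    ∃ m : ℕ, 1 ≤ m ∧ m ≤ (2 + 4 * mfac S * C) ^ (Fintype.card S ^ 2) ∧
      A ^ (2 * mfac S * Fintype.card S * m) = stab A := by
  classical
  obtain ⟨t, ht1, htNb, hidem⟩ := exists_idem hA hdeg hC
  refine ⟨t, ht1, htNb, ?_⟩
  have hn1 : 1 ≤ Fintype.card S := Fintype.card_pos_iff.mpr ⟨s₀⟩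
  have hm1 : 1 ≤ mfac S := one_le_mfac s₀
  set n := Fintype.card S with hn
  set Λ := 2 * mfac S * n * t with hΛ
  have hΛ1 : 1 ≤ Λ := by
    have : 1 * 1 * 1 * 1 ≤ 2 * mfac S * n * t := by
      gcongr <;> omega
    omega
  have hpowE : A ^ Λ = (A ^ (2 * mfac S * n)) ^ t := pow_mul A _ t
  set E := A ^ Λ with hE
  have hEE : E * E = E := by
    rw [hpowE, ← pow_add, hidem]
  have hidempow : ∀ k, 1 ≤ k → E ^ k = E := by
    intro k hk
    induction k with
    | zero => omega
    | succ k ih =>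
        rcases Nat.eq_zero_or_pos k with h0 | h0
        · rw [h0, pow_one]
        · rw [pow_succ, ih h0, hEE]
  have hEdiag : ∀ x, 0 ≤ en E x x := fun x => (hA Λ hΛ1).2 x
  show E = stab A
  ext s r
  apply Tropical.untrop_injective
  show en E s r = en (stab A) s r
  have hle : en E s r ≤ en (stab A) s r := by
    have hj2 : 2 ≤ 2 * n * t := by nlinarith
    have hexp : mfac S * (2 * n * t) = Λ := by rw [hΛ]; ring
    have := pow_le_stab hA s r hj2
    rw [hexp] at this
    exact this
  refine le_antisymm hle ?_
  by_cases htop : en E s r = ⊤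
  · rw [htop]; exact le_top
  -- the chain argument
  have hE3 : E ^ (n + 1) = E := hidempow (n + 1) (by omega)
  have hfin : en (E ^ (n + 1)) s r ≠ ⊤ := by rw [hE3]; exact htop
  obtain ⟨v, hv0, hv1, hvw⟩ := exists_walk E hfin
  rw [hE3] at hvw
  obtain ⟨a, b, hab, hbn, hvab⟩ := exists_repeat v
  set w := v a with hw
  have hsplit : wt E v (n + 1) =
      wt E v a + (wt E (fun u => v (a + u)) (b - a) + wt E (fun u => v (b + u)) (n + 1 - b)) := by
    conv_lhs => rw [show n + 1 = a + (n + 1 - a) from by omega]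
    rw [wt_add]
    congr 1
    have h2 : wt E (fun u => v (a + u)) (n + 1 - a) =
        wt E (fun u => v (a + u)) (b - a) + wt E (fun u => v (a + ((b - a) + u))) (n + 1 - b) := by
      conv_lhs => rw [show n + 1 - a = (b - a) + (n + 1 - b) from by omega]
      rw [wt_add]
    rw [h2]
    congr 1
    apply wt_congr
    intro u _
    rw [show a + ((b - a) + u) = b + u from by omega]
  set P := wt E v a with hP
  set σ := wt E (fun u => v (a + u)) (b - a) with hσdef
  set Q := wt E (fun u => v (b + u)) (n + 1 - b) with hQdef
  have htot : P + (σ + Q) = en E s r := by rw [← hsplit, hvw]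
  have htot' : P + (σ + Q) ≠ ⊤ := by rw [htot]; exact htop
  have hPfin : P ≠ ⊤ := fun hc => htot' (by rw [hc, top_add])
  have hσfin : σ ≠ ⊤ := fun hc => htot' (by rw [hc, top_add, add_top])
  have hQfin : Q ≠ ⊤ := fun hc => htot' (by rw [hc, add_top, add_top])
  have hPge : en (E ^ a) s w ≤ P := by
    have h1 : en (E ^ a) (v 0) (v a) ≤ wt E v a := en_pow_le_wt E
    rw [hv0] at h1
    exact h1
  have hσge : en (E ^ (b - a)) w w ≤ σ := by
    have h1 : en (E ^ (b - a)) ((fun u => v (a + u)) 0) ((fun u => v (a + u)) (b - a))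
        ≤ wt E (fun u => v (a + u)) (b - a) := en_pow_le_wt E
    have e0 : (fun u => v (a + u)) 0 = w := by simp only [Nat.add_zero, hw]
    have e1 : (fun u => v (a + u)) (b - a) = w := by
      simp only; rw [show a + (b - a) = b from by omega, ← hvab]
    rw [e0, e1] at h1
    exact h1
  have hQge : en (E ^ (n + 1 - b)) w r ≤ Q := by
    have h1 : en (E ^ (n + 1 - b)) ((fun u => v (b + u)) 0) ((fun u => v (b + u)) (n + 1 - b))
        ≤ wt E (fun u => v (b + u)) (n + 1 - b) := en_pow_le_wt E
    have e0 : (fun u => v (b + u)) 0 = w := by simp only [Nat.add_zero]; rw [← hvab]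
    have e1 : (fun u => v (b + u)) (n + 1 - b) = r := by
      simp only; rw [show b + (n + 1 - b) = n + 1 from by omega, hv1]
    rw [e0, e1] at h1
    exact h1
  have hPQ : en E s r ≤ P + Q := by
    calc en E s r = en (E ^ (a + (n + 1 - b))) s r := by rw [hidempow _ (by omega)]
      _ ≤ en (E ^ a) s w + en (E ^ (n + 1 - b)) w r := en_pow_add_le E _ _ _ _ _
      _ ≤ P + Q := add_le_add hPge hQge
  have hPQfin : P + Q ≠ ⊤ := WithTop.add_ne_top.mpr ⟨hPfin, hQfin⟩
  have hσle : σ ≤ 0 := by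
    refine zinf_le_zero_of_add hPQfin ?_
    calc (P + Q) + σ = P + (σ + Q) := by rw [add_assoc, add_comm Q σ]
      _ = en E s r := htot
      _ ≤ P + Q := hPQ
  have hEba : en (E ^ (b - a)) w w = en E w w := by rw [hidempow _ (by omega)]
  have hEww : en E w w = 0 := by
    refine le_antisymm ?_ (hEdiag w)
    rw [← hEba]
    exact le_trans hσge hσle
  have hσge0 : 0 ≤ σ := by
    rw [← hEww, ← hEba]; exact hσge
  -- zero cycle at w in A
  have hAw : en (A ^ Λ) w w = 0 := by rw [← hE]; exact hEww
  obtain ⟨z, hz0, hz1, hzw⟩ := exists_walk A (L := Λ) (by rw [hAw]; exact (by simp : (0 : ZInf) ≠ ⊤))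
  obtain ⟨γ, cg, hcg1, hcgn, hγ0, hγ1, hγw⟩ :=
    extract_cycle_zero A (hdiag_of hA) Λ (by omega) z hz0 hz1 (hzw.trans hAw)
  have hcgm : cg ∣ mfac S := dvd_mfac hcg1 hcgn
  have hcgΛ : cg ∣ Λ := hcgm.trans ⟨2 * n * t, by rw [hΛ]; ring⟩
  have hMww : en (A ^ mfac S) w w = 0 := by
    refine le_antisymm ?_ (hdiag_of hA _ hm1 w)
    obtain ⟨h2, hh0, hh1, hhw⟩ := cycle_pow A hγ0 hγ1 (mfac S / cg)
    rw [Nat.div_mul_cancel hcgm] at hh1 hhw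
    have h3 : en (A ^ mfac S) (h2 0) (h2 (mfac S)) ≤ wt A h2 (mfac S) := en_pow_le_wt A
    rw [hh0, hh1, hhw, hγw, smul_zero] at h3
    exact h3
  have hMsw : en (A ^ mfac S) s w ≤ P := by
    rcases Nat.eq_zero_or_pos a with ha0 | ha0
    · have hws : w = s := by rw [hw, ha0, hv0]
      have hP0 : P = 0 := by rw [hP, ha0, wt_zero]
      rw [hP0, hws]
      rw [hws] at hMww
      exact le_of_eq hMww
    · have h4 : en E s w ≤ P := by rw [← hidempow a ha0]; exact hPge
      have h5 : en (A ^ Λ) s w ≠ ⊤ := by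
        rw [← hE]
        exact fun hc => hPfin (top_le_iff.mp (hc ▸ h4))
      obtain ⟨zz, hzz0, hzz1, hzzw⟩ := exists_walk A h5
      have h6 := reach_exact A (hdiag_of hA) hγ0 hγ1 hγw hcgn hcgm (sq_card_le_mfac s)
        Λ zz hzz0 hzz1 hcgΛ
      rw [hzzw] at h6
      exact le_trans h6 h4
  have hMwr : en (A ^ mfac S) w r ≤ Q := by
    have h4 : en E w r ≤ Q := by rw [← hidempow (n + 1 - b) (by omega)]; exact hQge
    have h5 : en (A ^ Λ) w r ≠ ⊤ := by
      rw [← hE]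
      exact fun hc => hQfin (top_le_iff.mp (hc ▸ h4))
    obtain ⟨zz, hzz0, hzz1, hzzw⟩ := exists_walk A h5
    have h6 := reach_exact' A (hdiag_of hA) hγ0 hγ1 hγw hcgn hcgm (sq_card_le_mfac s)
      Λ zz hzz0 hzz1 hcgΛ
    rw [hzzw] at h6
    exact le_trans h6 h4
  calc en (stab A) s r
      ≤ ite (en (A ^ mfac S) w w = 0) (en (A ^ mfac S) s w + en (A ^ mfac S) w r) ⊤ := by
        rw [en_stab]; exact Finset.inf_le (Finset.mem_univ w)
    _ = en (A ^ mfac S) s w + en (A ^ mfac S) w r := if_pos hMww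
    _ ≤ P + Q := add_le_add hMsw hMwr
    _ ≤ P + (σ + Q) := add_le_add (le_refl P) (le_add_of_nonneg_left hσge0)
    _ = en E s r := htot
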